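/- arXiv:1605.03789 — 4 statements merged into one kernel-verified Lean document; each statement's English description precedes it below -/
import Mathlib

section
/- In any lattice L equipped with a function r : L → ℝ that is strictly isotone (x < y implies r(x) < r(y)) and submodular (r(x ⊔ y) + r(x ⊓ y) ≤ r(x) + r(y)), the function d(x, y) := 2·r(x ⊔ y) − r(x) − r(y) is a metric on L. -/
/-- In any lattice `L` with a strictly isotone and submodular function `r : L → ℝ`,
`d(x, y) := 2 r(x ⊔ y) − r x − r y` is a metric. -/
theorem matroid_lattice_metric {L : Type*} [Lattice L] (r : L → ℝ)
    (hmono : ∀ x y : L, x < y → r x < r y)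
    (hsub : ∀ x y : L, r (x ⊔ y) + r (x ⊓ y) ≤ r x + r y) :
    (∀ x y : L, 0 ≤ 2 * r (x ⊔ y) - r x - r y) ∧
    (∀ x y : L, 2 * r (x ⊔ y) - r x - r y = 0 ↔ x = y) ∧
    (∀ x y : L, 2 * r (x ⊔ y) - r x - r y = 2 * r (y ⊔ x) - r y - r x) ∧
    (∀ x t y : L, 2 * r (x ⊔ y) - r x - r y ≤
      (2 * r (x ⊔ t) - r x - r t) + (2 * r (t ⊔ y) - r t - r y)) := by
  have hle : ∀ x y : L, x ≤ y → r x ≤ r y := by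
    intro x y h
    rcases h.lt_or_eq with h' | h'
    · exact (hmono x y h').le
    · exact h' ▸ le_refl _
  refine ⟨?_, ?_, ?_, ?_⟩
  · intro x y
    have h1 := hle x (x ⊔ y) le_sup_left
    have h2 := hle y (x ⊔ y) le_sup_right
    linarith
  · intro x y
    constructor
    · intro h
      by_contra hne
      have h1 := hle x (x ⊔ y) le_sup_left
      have h2 := hle y (x ⊔ y) le_sup_right
      rcases lt_or_eq_of_le (le_sup_left : x ≤ x ⊔ y) with hx | hx
      · have := hmono x (x ⊔ y) hx; linarith
      · rcases lt_or_eq_of_le (le_sup_right : y ≤ x ⊔ y) with hy | hy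
        · have := hmono y (x ⊔ y) hy; linarith
        · exact hne (hx.trans hy.symm)
    · rintro rfl; simp; ring
  · intro x y; rw [sup_comm]; ring
  · intro x t y
    have h1 := hsub (x ⊔ t) (t ⊔ y)
    have h2 : r (x ⊔ y) ≤ r ((x ⊔ t) ⊔ (t ⊔ y)) := by
      apply hle
      exact sup_le (le_sup_of_le_left le_sup_left) (le_sup_of_le_right le_sup_right)
    have h3 : r t ≤ r ((x ⊔ t) ⊓ (t ⊔ y)) := by
      apply hle
      exact le_inf le_sup_right le_sup_left
    linarith
end

section
/- Let V be a finite-dimensional vector space over a finite field, B a collection of k-dimensional subspaces of V such that every t-dimensional subspace lies in exactly λ members of B (a t-(n,k,λ) subspace design, n = dim V). Then the collection T·B of all translates v + U with v ∈ V and U ∈ B is a (t+1)-(n+1, k+1, λ) affine design: every t-dimensional affine subspace (coset of a t-dimensional linear subspace) of V is contained in exactly λ members of T·B. -/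
open Module in
/-- If `B` is a `t-(n, k, λ)` subspace design in `V`, then the family of all
translates of members of `B` is a `(t+1)-(n+1, k+1, λ)` affine design: every
`t`-dimensional affine subspace (coset of a `t`-dimensional linear subspace)
of `V` is contained in exactly `λ` translates. -/
theorem subspace_design_to_affine_design
    {K V : Type*} [Field K] [Fintype K] [AddCommGroup V] [Module K V]
    [FiniteDimensional K V] (n t k lam : ℕ) (hn : finrank K V = n)
    (B : Set (Submodule K V))
    (hBdim : ∀ U ∈ B, finrank K U = k)
    (hdesign : ∀ T : Submodule K V, finrank K T = t → {U ∈ B | T ≤ U}.ncard = lam) :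
    ∀ (w : V) (T : Submodule K V), finrank K T = t →
      {W : Set V | ∃ v : V, ∃ U ∈ B, W = (v + ·) '' (U : Set V) ∧
          (w + ·) '' (T : Set V) ⊆ W}.ncard = lam := by
  intro w T hT
  have hinjf : Function.Injective (w + ·) := fun x y hxy => by simpa using hxy
  have hinj : Set.InjOn (fun U : Submodule K V => (w + ·) '' (U : Set V))
      {U ∈ B | T ≤ U} := by
    intro U _ U' _ h
    exact SetLike.coe_injective ((Set.image_eq_image hinjf).mp h)
  have hset : {W : Set V | ∃ v : V, ∃ U ∈ B, W = (v + ·) '' (U : Set V) ∧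
      (w + ·) '' (T : Set V) ⊆ W}
      = (fun U : Submodule K V => (w + ·) '' (U : Set V)) '' {U ∈ B | T ≤ U} := by
    ext W
    constructor
    · rintro ⟨v, U, hU, rfl, hsub⟩
      have hw : w ∈ (fun x => v + x) '' (U : Set V) := hsub ⟨0, T.zero_mem, add_zero w⟩
      obtain ⟨u, hu, huw⟩ := hw
      -- huw : v + u = w
      have hTU : T ≤ U := by
        intro x hx
        obtain ⟨u', hu', h'⟩ := hsub ⟨x, hx, rfl⟩
        -- h' : v + u' = w + x
        have hx' : x = u' - u := by
          simp only [← huw] at h'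
          have h'' : v + u' = v + (u + x) := by simpa [add_assoc] using h'
          rw [add_left_cancel h'']; abel
        rw [hx']; exact U.sub_mem hu' hu
      refine ⟨U, ⟨hU, hTU⟩, ?_⟩
      ext y
      constructor
      · rintro ⟨x, hx, rfl⟩
        exact ⟨u + x, U.add_mem hu hx, by show v + (u + x) = w + x; rw [← huw]; show v + (u + x) = v + u + x; abel⟩
      · rintro ⟨x, hx, rfl⟩
        exact ⟨x - u, U.sub_mem hx hu, by show w + (x - u) = v + x; rw [← huw]; show v + u + (x - u) = v + x; abel⟩
    · rintro ⟨U, ⟨hU, hTU⟩, rfl⟩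
      exact ⟨w, U, hU, rfl, Set.image_mono (SetLike.coe_subset_coe.mpr hTU)⟩
  rw [hset, Set.ncard_image_of_injOn hinj]
  exact hdesign T hT
end

section
/- For any 2-(n, k, λ) subspace design of order 2, the point sets (over 𝔽_2, with the translate construction) yield a classical 3-(2^n, 2^k, λ) design. In particular, from any 2-(n, 3, 1) subspace Steiner system over 𝔽_2 one obtains a classical Steiner system S(3, 8, 2^n). -/
open Module

lemma zmod2_add_self {V : Type*} [AddCommGroup V] [Module (ZMod 2) V] (v : V) :
    v + v = 0 := by
  have h : ((2 : ZMod 2) : ZMod 2) • v = 0 := by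
    rw [show (2 : ZMod 2) = 0 from rfl, zero_smul]
  rw [← two_smul (ZMod 2) v]
  exact h

lemma zmod2_add_add {V : Type*} [AddCommGroup V] [Module (ZMod 2) V] (a b : V) :
    a + (a + b) = b := by rw [← add_assoc, zmod2_add_self, zero_add]

lemma zmod2_add_add' {V : Type*} [AddCommGroup V] [Module (ZMod 2) V] (a b : V) :
    a + b + b = a := by rw [add_assoc, zmod2_add_self, add_zero]

lemma zmod2_span_pair_finrank {V : Type*} [AddCommGroup V] [Module (ZMod 2) V]
    {a b : V} (ha : a ≠ 0) (hb : b ≠ 0) (hab : a ≠ b) :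
    finrank (ZMod 2) (Submodule.span (ZMod 2) {a, b}) = 2 := by
  have hli : LinearIndependent (ZMod 2) ![a, b] := by
    rw [LinearIndependent.pair_iff]
    intro s t hst
    have hs := (by decide : ∀ s : ZMod 2, s = 0 ∨ s = 1) s
    have ht := (by decide : ∀ s : ZMod 2, s = 0 ∨ s = 1) t
    rcases hs with rfl | rfl <;> rcases ht with rfl | rfl <;>
      simp_all
    exfalso
    apply hab
    have h3 := congrArg (· + b) hst
    rwa [zmod2_add_add', zero_add] at h3
  have hr : Set.range ![a, b] = ({a, b} : Set V) := by
    ext w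
    simp [Matrix.range_cons, Matrix.range_empty]
    exact or_comm
  have := finrank_span_eq_card hli
  rw [hr] at this
  simpa using this

open Module in
/-- From a `2-(n, k, λ)` subspace design over `𝔽₂`, the translates of the
blocks form a classical `3-(2^n, 2^k, λ)` design: the ground set has `2^n`
points, each translate has `2^k` points, and every `3`-element subset lies in
exactly `λ` translates.  In particular a `2-(n, 3, 1)` subspace Steiner system
yields a classical Steiner system `S(3, 8, 2^n)`. -/
theorem subspace_design_order_two_to_classical_3design
    {V : Type*} [AddCommGroup V] [Module (ZMod 2) V]
    [FiniteDimensional (ZMod 2) V] [Fintype V] (n k lam : ℕ)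
    (hn : finrank (ZMod 2) V = n)
    (B : Set (Submodule (ZMod 2) V))
    (hBdim : ∀ U ∈ B, finrank (ZMod 2) U = k)
    (hdesign : ∀ T : Submodule (ZMod 2) V, finrank (ZMod 2) T = 2 →
      {U ∈ B | T ≤ U}.ncard = lam) :
    Fintype.card V = 2 ^ n ∧
    (∀ W ∈ {W : Set V | ∃ v : V, ∃ U ∈ B, W = (v + ·) '' (U : Set V)},
      W.ncard = 2 ^ k) ∧
    (∀ x y z : V, x ≠ y → x ≠ z → y ≠ z →
      {W ∈ {W : Set V | ∃ v : V, ∃ U ∈ B, W = (v + ·) '' (U : Set V)} |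
        x ∈ W ∧ y ∈ W ∧ z ∈ W}.ncard = lam) := by
  have hadd : ∀ v : V, v + v = 0 := zmod2_add_self
  have h2 : ∀ a b : V, a + (a + b) = b := zmod2_add_add
  have h2' : ∀ a b : V, a + b + b = a := zmod2_add_add'
  refine ⟨?_, ?_, ?_⟩
  · rw [← hn]; exact card_eq_pow_finrank (K := ZMod 2)
  · rintro W ⟨v, U, hU, rfl⟩
    rw [Set.ncard_image_of_injective _ (add_right_injective v)]
    haveI : Fintype U := Fintype.ofFinite U
    have e1 : (U : Set V).ncard = Nat.card U := by
      rw [← Nat.card_coe_set_eq]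
      exact Nat.card_congr (Equiv.refl _)
    rw [e1, Nat.card_eq_fintype_card, ← hBdim U hU]
    exact card_eq_pow_finrank (K := ZMod 2)
  · intro x y z hxy hxz hyz
    set T := Submodule.span (ZMod 2) {x + y, x + z} with hT
    have hTrank : finrank (ZMod 2) T = 2 := by
      apply zmod2_span_pair_finrank
      · intro h
        apply hxy
        have h3 := congrArg (x + ·) h
        simp only [h2, add_zero] at h3
        exact h3.symm
      · intro h
        apply hxz
        have h3 := congrArg (x + ·) h
        simp only [h2, add_zero] at h3
        exact h3.symm
      · intro h
        apply hyz
        have := congrArg (x + ·) h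
        simp only [h2] at this
        exact this
    have key : {W ∈ {W : Set V | ∃ v : V, ∃ U ∈ B, W = (v + ·) '' (U : Set V)} |
        x ∈ W ∧ y ∈ W ∧ z ∈ W} =
        (fun U : Submodule (ZMod 2) V => (x + ·) '' (U : Set V)) '' {U ∈ B | T ≤ U} := by
      ext W
      constructor
      · rintro ⟨⟨v, U, hU, rfl⟩, hx, hy, hz⟩
        obtain ⟨ux, hux, hx⟩ := hx
        obtain ⟨uy, huy, hy⟩ := hy
        obtain ⟨uz, huz, hz⟩ := hz
        dsimp only at hx hy hz
        have hxv : v + x ∈ U := by rw [← hx, h2]; exact hux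
        have hyv : v + y ∈ U := by rw [← hy, h2]; exact huy
        have hzv : v + z ∈ U := by rw [← hz, h2]; exact huz
        have hxyU : x + y ∈ U := by
          have := U.add_mem hxv hyv
          have e : (v + x) + (v + y) = x + y := by
            rw [add_comm v x, add_assoc, h2]
          rwa [e] at this
        have hxzU : x + z ∈ U := by
          have := U.add_mem hxv hzv
          have e : (v + x) + (v + z) = x + z := by
            rw [add_comm v x, add_assoc, h2]
          rwa [e] at this
        refine ⟨U, ⟨hU, ?_⟩, ?_⟩
        · rw [hT, Submodule.span_le]
          rintro w (rfl | rfl)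
          exacts [hxyU, hxzU]
        · ext w
          constructor
          · rintro ⟨u, hu, rfl⟩
            refine ⟨v + (x + u), ?_, h2 v (x + u)⟩
            have e : v + (x + u) = (v + x) + u := by rw [add_assoc]
            rw [e]
            exact U.add_mem hxv hu
          · rintro ⟨u, hu, rfl⟩
            refine ⟨x + (v + u), ?_, h2 x (v + u)⟩
            have e : x + (v + u) = (v + x) + u := by
              rw [add_comm v x, add_assoc]
            rw [e]
            exact U.add_mem hxv hu
      · rintro ⟨U, ⟨hU, hTle⟩, rfl⟩
        have hxyU : x + y ∈ U := hTle (Submodule.subset_span (by simp))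
        have hxzU : x + z ∈ U := hTle (Submodule.subset_span (by simp))
        exact ⟨⟨x, U, hU, rfl⟩, ⟨0, U.zero_mem, by simp⟩,
          ⟨x + y, hxyU, h2 x y⟩, ⟨x + z, hxzU, h2 x z⟩⟩
    rw [key, Set.ncard_image_of_injOn]
    · exact hdesign T hTrank
    · intro U1 _ U2 _ h
      apply SetLike.coe_injective
      have := congrArg (Set.image (x + ·)) h
      rwa [← Set.image_comp, ← Set.image_comp,
        (by ext w; simp [h2] : ((x + ·) ∘ (x + ·) : V → V) = id),
        Set.image_id, Set.image_id] at this
end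

section
/- Let q be a prime power, m ≥ 1, 1 ≤ t − 1 ≤ ℓ ≤ m, U an ℓ-dimensional 𝔽_q-affine subspace of 𝔽_{q^m}, and L_t the set of affine polynomials a + Σ_{i=0}^{t−2} f_i X^{q^i} over 𝔽_{q^m}. Then the code C = { Γ(g|_U) : g ∈ L_t }, where Γ(g|_U) = {(x, g(x)) : x ∈ U} ⊆ U × 𝔽_{q^m}, has exactly q^{m·t} elements, each member is an ℓ-dimensional affine subspace of V = 𝔽_{q^m} × 𝔽_{q^m} (restricted to the ambient affine space U × 𝔽_{q^m}), and for distinct X, Y ∈ C the intersection X ∩ Y is an affine subspace of dimension at most t − 2 (possibly empty). -/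
section PolyCodeAuxSec
open Module Finset Polynomial

set_option linter.unusedSectionVars false
set_option maxHeartbeats 1000000

namespace PolyCodeAux

section Lin
variable {K F : Type*} [Field K] [Fintype K] [Field F] [Fintype F] [Algebra K F]

lemma qpow_add (x y : F) (i : ℕ) :
    (x + y) ^ (Fintype.card K) ^ i = x ^ (Fintype.card K) ^ i + y ^ (Fintype.card K) ^ i := by
  set p := ringChar K with hpdef
  obtain ⟨n, hp, hK⟩ := FiniteField.card K p
  haveI : Fact p.Prime := ⟨hp⟩
  haveI : CharP F p := charP_of_injective_algebraMap (algebraMap K F).injective p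
  rw [hK, ← pow_mul]
  exact add_pow_char_pow _ _ _ _

lemma qpow_smul (c : K) (x : F) (i : ℕ) :
    (c • x) ^ (Fintype.card K) ^ i = c • x ^ (Fintype.card K) ^ i := by
  rw [Algebra.smul_def, Algebra.smul_def, mul_pow, ← map_pow, FiniteField.pow_card_pow]

/-- The `K`-linear map `x ↦ ∑ f i * x ^ q ^ i`. -/
noncomputable def Lmap (n : ℕ) (f : ℕ → F) : F →ₗ[K] F where
  toFun x := ∑ i ∈ Finset.range n, f i * x ^ (Fintype.card K) ^ i
  map_add' x y := by
    simp only [qpow_add (K := K), mul_add, Finset.sum_add_distrib]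
  map_smul' c x := by
    simp only [qpow_smul (K := K), RingHom.id_apply, Finset.smul_sum, mul_smul_comm]

@[simp] lemma Lmap_apply (n : ℕ) (f : ℕ → F) (x : F) :
    Lmap (K := K) n f x = ∑ i ∈ Finset.range n, f i * x ^ (Fintype.card K) ^ i := rfl

lemma Lmap_sub (n : ℕ) (f g : ℕ → F) (x : F) :
    Lmap (K := K) n (f - g) x = Lmap (K := K) n f x - Lmap (K := K) n g x := by
  simp [sub_mul, Finset.sum_sub_distrib]

end Lin

section Poly
variable {F : Type*} [Field F]

/-- The affine `q`-polynomial `C c + ∑ C (e i) X^(q^i)`. -/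
noncomputable def Pm (q n : ℕ) (c : F) (e : ℕ → F) : F[X] :=
  C c + ∑ i ∈ Finset.range n, C (e i) * X ^ (q ^ i)

lemma Pm_eval (q n : ℕ) (c : F) (e : ℕ → F) (x : F) :
    (Pm q n c e).eval x = c + ∑ i ∈ Finset.range n, e i * x ^ q ^ i := by
  simp [Pm, eval_finset_sum]

lemma Pm_sum_natDegree_le (q n : ℕ) (hq : 1 ≤ q) (e : ℕ → F) :
    (∑ i ∈ Finset.range n, C (e i) * X ^ (q ^ i) : F[X]).natDegree ≤ q ^ (n - 1) := by
  refine natDegree_sum_le_of_forall_le _ _ fun i hi => ?_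
  refine (natDegree_C_mul_le _ _).trans ?_
  rw [natDegree_X_pow]
  exact Nat.pow_le_pow_right hq (by simpa using Nat.le_sub_one_of_lt (Finset.mem_range.mp hi))

lemma Pm_natDegree_le (q n : ℕ) (hq : 1 ≤ q) (c : F) (e : ℕ → F) :
    (Pm q n c e).natDegree ≤ q ^ (n - 1) := by
  refine (natDegree_add_le _ _).trans (max_le ?_ (Pm_sum_natDegree_le q n hq e))
  simp

lemma Pm_natDegree_lt (q n : ℕ) (hq : 2 ≤ q) (c : F) (e : ℕ → F) :
    (Pm q n c e).natDegree < q ^ n := by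
  have h0 : 0 < q ^ n := (Nat.pow_pos (by omega : 0 < q) : 0 < q ^ n)
  cases n with
  | zero => simpa [Pm] using h0
  | succ n =>
    refine lt_of_le_of_lt (Pm_natDegree_le q (n+1) (by omega) c e) ?_
    simpa using Nat.pow_lt_pow_right (by omega) (by omega)

lemma Pm_coeff_zero (q n : ℕ) (hq : 1 ≤ q) (c : F) (e : ℕ → F) :
    (Pm q n c e).coeff 0 = c := by
  rw [Pm, coeff_add, coeff_C, if_pos rfl, finset_sum_coeff]
  rw [Finset.sum_eq_zero, add_zero]
  intro i _
  rw [coeff_C_mul, coeff_X_pow, if_neg (Nat.ne_of_lt ((Nat.pow_pos (by omega : 0 < q) : 0 < q ^ i))), mul_zero]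

lemma Pm_coeff_qpow (q n : ℕ) (hq : 2 ≤ q) (c : F) (e : ℕ → F) {j : ℕ} (hj : j < n) :
    (Pm q n c e).coeff (q ^ j) = e j := by
  have hq0 : q ^ j ≠ 0 := by positivity
  rw [Pm, coeff_add, coeff_C, if_neg hq0, zero_add, finset_sum_coeff]
  rw [Finset.sum_eq_single j]
  · rw [coeff_C_mul, coeff_X_pow, if_pos rfl, mul_one]
  · intro i _ hij
    rw [coeff_C_mul, coeff_X_pow, if_neg (fun h => hij (Nat.pow_right_injective hq h.symm)),
      mul_zero]
  · exact fun h => absurd (Finset.mem_range.mpr hj) h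

lemma Pm_eq_zero (q n : ℕ) (hq : 2 ≤ q) (c : F) (e : ℕ → F) (h : Pm q n c e = 0) :
    c = 0 ∧ ∀ j < n, e j = 0 := by
  refine ⟨by rw [← Pm_coeff_zero q n (by omega) c e, h, coeff_zero], fun j hj => ?_⟩
  rw [← Pm_coeff_qpow q n hq c e hj, h, coeff_zero]

lemma card_le_natDegree {P : F[X]} (hP : P ≠ 0) (s : Finset F)
    (h : ∀ x ∈ s, P.eval x = 0) : s.card ≤ P.natDegree := by
  classical
  calc s.card ≤ P.roots.toFinset.card := Finset.card_le_card (fun x hx => by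
        simp only [Multiset.mem_toFinset, mem_roots', IsRoot.def]
        exact ⟨hP, h x hx⟩)
    _ ≤ Multiset.card P.roots := Multiset.toFinset_card_le _
    _ ≤ P.natDegree := P.card_roots'

end Poly

section Main
variable {K F : Type*} [Field K] [Fintype K] [Field F] [Fintype F] [Algebra K F]

/-- The graph of the affine polynomial `a + ∑ f i * X^(q^i)` on the coset `u₀ + U₀`. -/
def Xset (t : ℕ) (u₀ : F) (U₀ : Submodule K F) (a : F) (f : ℕ → F) : Set (F × F) :=
  {p : F × F | p.1 ∈ (u₀ + ·) '' (U₀ : Set F) ∧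
    p.2 = a + ∑ i ∈ Finset.range (t - 1), f i * p.1 ^ (Fintype.card K) ^ i}

lemma graph_eq (n : ℕ) (f : ℕ → F) (a s₀ : F) (V' : Submodule K F) :
    {p : F × F | p.1 ∈ (s₀ + ·) '' (V' : Set F) ∧ p.2 = a + Lmap (K := K) n f p.1}
      = ((s₀, a + Lmap (K := K) n f s₀) + ·) ''
          ((V'.map ((LinearMap.id : F →ₗ[K] F).prod (Lmap n f))) : Set (F × F)) := by
  ext p
  constructor
  · rintro ⟨⟨v, hv, hveq⟩, hy⟩
    refine ⟨((LinearMap.id : F →ₗ[K] F).prod (Lmap n f)) v,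
      Submodule.mem_map_of_mem hv, ?_⟩
    show (s₀ + v, a + Lmap (K := K) n f s₀ + Lmap (K := K) n f v) = p
    rw [Prod.ext_iff]
    refine ⟨hveq, ?_⟩
    rw [hy, ← hveq, map_add, add_assoc]
  · rintro ⟨w, hw, rfl⟩
    obtain ⟨v, hv, rfl⟩ := Submodule.mem_map.mp hw
    refine ⟨⟨v, hv, rfl⟩, ?_⟩
    show a + Lmap (K := K) n f s₀ + Lmap (K := K) n f v = a + Lmap (K := K) n f (s₀ + v)
    rw [map_add, add_assoc]

lemma map_graph_finrank (n : ℕ) (f : ℕ → F) (V' : Submodule K F) :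
    finrank K (V'.map ((LinearMap.id : F →ₗ[K] F).prod (Lmap n f))) = finrank K V' := by
  have hinj : Function.Injective ((LinearMap.id : F →ₗ[K] F).prod (Lmap n f)) := by
    intro u v h
    simpa using congrArg Prod.fst h
  exact (LinearEquiv.finrank_eq (V'.equivMapOfInjective _ hinj)).symm

end Main

end PolyCodeAux
end PolyCodeAuxSec

open PolyCodeAux in
open Module Finset in
/-- The polynomial-based code `C = { Γ(g|_U) : g ∈ L_t }` of graphs of affine
polynomials `a + Σ_{i=0}^{t-2} f_i X^{q^i}` restricted to an `ℓ`-dimensional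
affine `𝔽_q`-subspace `U ⊆ 𝔽_{q^m}` has `q^{m t}` elements, each member is an
`ℓ`-dimensional affine subspace of `𝔽_{q^m} × 𝔽_{q^m}`, and distinct members
intersect in an affine subspace of dimension at most `t - 2` (or `∅`). -/
theorem polynomial_code_construction
    {K F : Type*} [Field K] [Fintype K] [Field F] [Fintype F] [Algebra K F]
    (m t ℓ : ℕ) (ht : 1 ≤ t) (htl : t - 1 ≤ ℓ) (hlm : ℓ ≤ m)
    (hcard : Fintype.card F = Fintype.card K ^ m)
    (u₀ : F) (U₀ : Submodule K F) (hU₀ : finrank K U₀ = ℓ) :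
    let C : Set (Set (F × F)) := {X | ∃ (a : F) (f : ℕ → F),
      X = {p : F × F | p.1 ∈ (u₀ + ·) '' (U₀ : Set F) ∧
        p.2 = a + ∑ i ∈ Finset.range (t - 1), f i * p.1 ^ (Fintype.card K) ^ i}}
    C.ncard = Fintype.card K ^ (m * t) ∧
    (∀ X ∈ C, ∃ (w : F × F) (W : Submodule K (F × F)),
      finrank K W = ℓ ∧ X = (w + ·) '' (W : Set (F × F))) ∧
    (∀ X ∈ C, ∀ Y ∈ C, X ≠ Y →
      X ∩ Y = ∅ ∨ ∃ (w : F × F) (W : Submodule K (F × F)),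
        finrank K W ≤ t - 2 ∧ X ∩ Y = (w + ·) '' (W : Set (F × F))) := by
  
  intro C
  classical
  have hq2 : 2 ≤ Fintype.card K := Fintype.one_lt_card
  have hC : ∀ X : Set (F × F), X ∈ C ↔ ∃ a f, X = Xset t u₀ U₀ a f := fun X => Iff.rfl
  haveI : Fintype ↥U₀ := Fintype.ofFinite _
  set sU : Finset F := Finset.image (fun u : U₀ => u₀ + (u : F)) Finset.univ with hsUdef
  have hsU_card : sU.card = Fintype.card K ^ ℓ := by
    have hinj : Function.Injective (fun u : U₀ => u₀ + (u : F)) :=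
      fun u v h => Subtype.val_injective (by simpa using h)
    rw [hsUdef, Finset.card_image_of_injective _ hinj,
      Finset.card_univ, card_eq_pow_finrank (K := K), hU₀]
  have hsU_mem : ∀ x ∈ sU, x ∈ (u₀ + ·) '' (U₀ : Set F) := by
    intro x hx
    rw [hsUdef, Finset.mem_image] at hx
    obtain ⟨u, -, rfl⟩ := hx
    exact ⟨u, u.2, rfl⟩
  have keyPoly : ∀ (a b : F) (f g : ℕ → F), Xset t u₀ U₀ a f = Xset t u₀ U₀ b g →
      Pm (Fintype.card K) (t-1) (a - b) (f - g) = 0 := by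
    intro a b f g hfg
    apply Polynomial.eq_zero_of_natDegree_lt_card_of_eval_eq_zero' _ sU
    · intro x hx
      have h1 : ((x, a + ∑ i ∈ Finset.range (t-1), f i * x ^ (Fintype.card K) ^ i) : F × F)
          ∈ Xset t u₀ U₀ a f := ⟨hsU_mem x hx, rfl⟩
      rw [hfg] at h1
      have h2 := h1.2
      simp only at h2
      rw [Pm_eval]
      have h3 : ∑ i ∈ Finset.range (t-1), (f - g) i * x ^ (Fintype.card K) ^ i
          = (∑ i ∈ Finset.range (t-1), f i * x ^ (Fintype.card K) ^ i)
            - ∑ i ∈ Finset.range (t-1), g i * x ^ (Fintype.card K) ^ i := by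
        simp [sub_mul, Finset.sum_sub_distrib]
      rw [h3]
      linear_combination h2
    · rw [hsU_card]
      exact lt_of_lt_of_le (Pm_natDegree_lt _ _ hq2 _ _)
        (Nat.pow_le_pow_right (by omega) htl)
  have keyInj : ∀ (a b : F) (f g : ℕ → F), Xset t u₀ U₀ a f = Xset t u₀ U₀ b g →
      a = b ∧ ∀ i < t - 1, f i = g i := by
    intro a b f g h
    obtain ⟨h1, h2⟩ := Pm_eq_zero _ _ hq2 _ _ (keyPoly a b f g h)
    exact ⟨sub_eq_zero.mp h1, fun i hi => sub_eq_zero.mp (h2 i hi)⟩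
  have hXcongr : ∀ (a : F) (f g : ℕ → F), (∀ i < t - 1, f i = g i) →
      Xset t u₀ U₀ a f = Xset t u₀ U₀ a g := by
    intro a f g h
    have hsum : ∀ x : F, ∑ i ∈ Finset.range (t-1), f i * x ^ (Fintype.card K) ^ i
        = ∑ i ∈ Finset.range (t-1), g i * x ^ (Fintype.card K) ^ i := fun x =>
      Finset.sum_congr rfl (fun i hi => by rw [h i (Finset.mem_range.mp hi)])
    unfold Xset
    ext p
    simp only [Set.mem_setOf_eq, hsum]
  refine ⟨?_, ?_, ?_⟩
  · -- cardinality
    set Φ : F × (Fin (t-1) → F) → Set (F × F) :=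
      fun af => Xset t u₀ U₀ af.1 (fun i => if h : i < t - 1 then af.2 ⟨i, h⟩ else 0) with hΦdef
    have hCeq : C = Set.range Φ := by
      ext X
      rw [hC X]
      constructor
      · rintro ⟨a, f, rfl⟩
        exact ⟨(a, fun i => f i), (hXcongr a f _ (fun i hi => by simp [dif_pos hi])).symm⟩
      · rintro ⟨⟨a, f⟩, rfl⟩
        exact ⟨a, _, rfl⟩
    have hΦinj : Function.Injective Φ := by
      rintro ⟨a, f⟩ ⟨b, g⟩ h
      obtain ⟨h1, h2⟩ := keyInj _ _ _ _ h
      exact Prod.ext_iff.mpr ⟨h1, funext fun i => by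
        simpa [dif_pos i.2, Fin.eta] using h2 i.1 i.2⟩
    rw [hCeq, ← Set.image_univ, Set.ncard_image_of_injective _ hΦinj, Set.ncard_univ,
      Nat.card_eq_fintype_card, Fintype.card_prod, Fintype.card_fun, Fintype.card_fin, hcard,
      ← pow_mul, ← pow_add]
    congr 1
    obtain ⟨t', rfl⟩ : ∃ t', t = t' + 1 := ⟨t - 1, by omega⟩
    simp only [Nat.add_sub_cancel]
    ring
  · -- each member is an ℓ-dimensional affine subspace
    rintro X hX
    obtain ⟨a, f, rfl⟩ := (hC X).mp hX
    refine ⟨(u₀, a + Lmap (K := K) (t-1) f u₀),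
      U₀.map ((LinearMap.id : F →ₗ[K] F).prod (Lmap (t-1) f)), ?_, ?_⟩
    · rw [map_graph_finrank, hU₀]
    · exact graph_eq (t-1) f a u₀ U₀
  · -- intersections
    rintro X hX Y hY hXY
    obtain ⟨a, f, rfl⟩ := (hC X).mp hX
    obtain ⟨b, g, rfl⟩ := (hC Y).mp hY
    have hP0 : Pm (Fintype.card K) (t-1) (a-b) (f-g) ≠ 0 := by
      intro h
      obtain ⟨h1, h2⟩ := Pm_eq_zero _ _ hq2 _ _ h
      apply hXY
      rw [sub_eq_zero.mp h1]
      exact hXcongr b f g (fun i hi => sub_eq_zero.mp (h2 i hi))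
    by_cases hex : ∃ v₀ ∈ U₀,
        Polynomial.eval (u₀ + v₀) (Pm (Fintype.card K) (t-1) (a-b) (f-g)) = 0
    · right
      obtain ⟨v₀, hv₀, hroot⟩ := hex
      rw [Pm_eval] at hroot
      simp only [Pi.sub_apply, sub_mul, Finset.sum_sub_distrib] at hroot
      set D := Lmap (K := K) (t-1) (f - g) with hDdef
      have hD : ∀ z : F, D z = (∑ i ∈ Finset.range (t-1), f i * z ^ (Fintype.card K) ^ i)
          - ∑ i ∈ Finset.range (t-1), g i * z ^ (Fintype.card K) ^ i := by
        intro z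
        rw [hDdef, Lmap_sub (K := K) (t-1) f g z, Lmap_apply, Lmap_apply]
      set W' := U₀ ⊓ LinearMap.ker D with hW'def
      have hroot' : (a - b) + D (u₀ + v₀) = 0 := by
        rw [hD]
        linear_combination hroot
      have hinter : Xset t u₀ U₀ a f ∩ Xset t u₀ U₀ b g
          = {p : F × F | p.1 ∈ ((u₀ + v₀) + ·) '' (W' : Set F)
              ∧ p.2 = a + Lmap (K := K) (t-1) f p.1} := by
        ext p
        constructor
        · rintro ⟨⟨⟨u, hu, hxu⟩, hy1⟩, -, hy2⟩
          have hDp : (a - b) + D p.1 = 0 := by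
            rw [hD]
            linear_combination hy2 - hy1
          refine ⟨⟨u - v₀, Submodule.mem_inf.mpr ⟨sub_mem hu hv₀, ?_⟩, ?_⟩, hy1⟩
          · rw [LinearMap.mem_ker, show u - v₀ = p.1 - (u₀ + v₀) by rw [← hxu]; ring,
              map_sub]
            linear_combination hDp - hroot'
          · rw [← hxu]; ring
        · rintro ⟨⟨w, hw, hxw⟩, hy⟩
          obtain ⟨hwU, hwD⟩ := Submodule.mem_inf.mp hw
          simp only [Lmap_apply] at hy
          refine ⟨⟨⟨v₀ + w, add_mem hv₀ hwU, by rw [← hxw]; ring⟩, hy⟩,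
            ⟨v₀ + w, add_mem hv₀ hwU, by rw [← hxw]; ring⟩, ?_⟩
          have hDp : (a - b) + D p.1 = 0 := by
            have h1 : D p.1 = D (u₀ + v₀) := by
              rw [← hxw, map_add, LinearMap.mem_ker.mp hwD, add_zero]
            rw [h1]; exact hroot'
          have h2 := hD p.1
          rw [hy]
          linear_combination hDp - h2
      refine ⟨((u₀ + v₀), a + Lmap (K := K) (t-1) f (u₀ + v₀)),
        W'.map ((LinearMap.id : F →ₗ[K] F).prod (Lmap (t-1) f)), ?_, ?_⟩
      · rw [map_graph_finrank]
        haveI : Fintype ↥W' := Fintype.ofFinite _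
        have hcardW : Fintype.card ↥W' = Fintype.card K ^ finrank K ↥W' :=
          card_eq_pow_finrank (K := K)
        set sW : Finset F := Finset.image (fun w : W' => (u₀ + v₀) + (w : F)) Finset.univ
          with hsWdef
        have hsWcard : sW.card = Fintype.card ↥W' := by
          have hinj : Function.Injective (fun w : W' => (u₀ + v₀) + (w : F)) :=
            fun u v h => Subtype.val_injective (by simpa using h)
          rw [hsWdef, Finset.card_image_of_injective _ hinj, Finset.card_univ]
        have hroots : ∀ x ∈ sW, Polynomial.eval x (Pm (Fintype.card K) (t-1) (a-b) (f-g)) = 0 := by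
          intro x hx
          rw [hsWdef, Finset.mem_image] at hx
          obtain ⟨w, -, rfl⟩ := hx
          rw [Pm_eval]
          simp only [Pi.sub_apply, sub_mul, Finset.sum_sub_distrib]
          have h1 : D ((u₀ + v₀) + (w : F)) = D (u₀ + v₀) := by
            rw [map_add, LinearMap.mem_ker.mp (Submodule.mem_inf.mp w.2).2, add_zero]
          have h2 := hD ((u₀ + v₀) + (w : F))
          linear_combination hroot' + h1 - h2
        have hle := card_le_natDegree hP0 sW hroots
        rw [hsWcard, hcardW] at hle
        have hdeg := Pm_natDegree_le (Fintype.card K) (t-1) (by omega) (a-b) (f-g)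
        have hfin : finrank K ↥W' ≤ t - 1 - 1 :=
          (Nat.pow_le_pow_iff_right hq2).mp (le_trans hle hdeg)
        omega
      · rw [hinter, graph_eq]
    · left
      rw [Set.eq_empty_iff_forall_notMem]
      rintro p hp
      obtain ⟨⟨⟨u, hu, hxu⟩, hy1⟩, -, hy2⟩ := hp
      refine hex ⟨u, hu, ?_⟩
      rw [Pm_eval]
      simp only [Pi.sub_apply, sub_mul, Finset.sum_sub_distrib]
      rw [← hxu] at hy1 hy2
      simp only at hy1 hy2
      linear_combination hy2 - hy1
end
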